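/- Let U* ∈ [0,1]^n satisfy U*_j = U*_k whenever φ_j = φ_k, let λ > 0, and define A*_j = min{1, λ/√(φ_j)}. Then replacing the virtual cost by the regularized virtual cost does not change the expected spending: Σ_{j=1}^{n} (1−U*_j)·A*_j·φ_j = Σ_{j=1}^{n} (1−U*_j)·A*_j·ψ_j. -/

import Mathlib

/-- Virtual cost of the uniform distribution over `{c 1, …, c n}`:
`ψ j = j·c j − (j−1)·c (j−1)`. -/
noncomputable def vc (c : ℕ → ℝ) (j : ℕ) : ℝ :=
  (j : ℝ) * c j - ((j : ℝ) - 1) * c (j - 1)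

/-- `Avg(l,k) = (1/(k−l+1))·Σ_{t=l}^{k} ψ_t`. -/
noncomputable def avg (c : ℕ → ℝ) (l k : ℕ) : ℝ :=
  (∑ t ∈ Finset.Icc l k, vc c t) / ((k : ℝ) - (l : ℝ) + 1)

/-- `ψ'_l = min_{l ≤ k ≤ n} Avg(l,k)`. -/
noncomputable def rvcAux (n : ℕ) (c : ℕ → ℝ) (l : ℕ) : ℝ :=
  sInf {x | ∃ k, l ≤ k ∧ k ≤ n ∧ x = avg c l k}

/-- Regularized virtual cost: `φ_j = max_{1 ≤ l ≤ j} ψ'_l`. -/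
noncomputable def rvc (n : ℕ) (c : ℕ → ℝ) (j : ℕ) : ℝ :=
  sSup {x | ∃ l, 1 ≤ l ∧ l ≤ j ∧ x = rvcAux n c l}

/-- A pair `(A, U)` is feasible: `0 < A_j ≤ 1`, `0 ≤ U_j ≤ 1`, the sequence
`(1−U_j)·A_j` is non-increasing, and the expected spending is within `B`. -/
def FeasPair (n : ℕ) (c : ℕ → ℝ) (B : ℝ) (A U : ℕ → ℝ) : Prop :=
  (∀ j, 1 ≤ j → j ≤ n → 0 < A j ∧ A j ≤ 1 ∧ 0 ≤ U j ∧ U j ≤ 1) ∧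
    (∀ j, 1 ≤ j → j < n → (1 - U (j + 1)) * A (j + 1) ≤ (1 - U j) * A j) ∧
    ∑ j ∈ Finset.Icc 1 n, (1 - U j) * A j * vc c j ≤ B

/-- The objective
`V(A,U) = β²·(1/n)·Σ (1−U_j)/A_j + ((1/n)·Σ U_j)²`. -/
noncomputable def objV (n : ℕ) (c : ℕ → ℝ) (β : ℝ) (A U : ℕ → ℝ) : ℝ :=
  β ^ 2 * (1 / (n : ℝ)) * (∑ j ∈ Finset.Icc 1 n, (1 - U j) / A j) +
    ((1 / (n : ℝ)) * ∑ j ∈ Finset.Icc 1 n, U j) ^ 2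

/-- A feasible pair is optimal if it minimizes the objective over all
feasible pairs. -/
def OptimalPair (n : ℕ) (c : ℕ → ℝ) (B β : ℝ) (A U : ℕ → ℝ) : Prop :=
  FeasPair n c B A U ∧
    ∀ A' U', FeasPair n c B A' U' → objV n c β A U ≤ objV n c β A' U'

/-! The regularized cost `φ` is the ironing of `ψ`. Starting at `k = 0`, let `K` be the largest
minimizer of `avg (k + 1) ·`; on the block `[k + 1, K]` the cost `φ` is constant, equal to that
minimal average, and these values strictly increase from block to block. So the partial sums of
`φ` and `ψ` agree at every block end, while inside a block `φ`, and with it every weight that is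
constant on level sets of `φ`, does not move. Abel summation then gives
`∑ w j * (φ j - ψ j) = 0`. -/

open Finset

theorem Finset.sum_Icc_mul_eq_mul_sum_Icc {R : Type*} [Semiring R] (w a : ℕ → R) (m : ℕ)
    (h : ∀ j, 1 ≤ j → j < m → ∑ t ∈ Icc 1 j, a t = 0 ∨ w j = w (j + 1)) :
    ∑ j ∈ Icc 1 m, w j * a j = w m * ∑ t ∈ Icc 1 m, a t := by
  induction m with
  | zero => simp
  | succ m ih =>
    rw [sum_Icc_succ_top (by omega), sum_Icc_succ_top (by omega),
      ih fun j hj hjm => h j hj (hjm.trans m.lt_succ_self), mul_add]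
    congr 1
    rcases Nat.eq_zero_or_pos m with rfl | hm
    · simp
    · rcases h m hm m.lt_succ_self with h0 | hw
      · simp [h0]
      · rw [hw]

theorem Finset.sum_Icc_add_sum_Icc {M : Type*} [AddCommMonoid M] (f : ℕ → M) {l m k : ℕ}
    (hlm : l ≤ m + 1) (hmk : m ≤ k) :
    ∑ t ∈ Icc l m, f t + ∑ t ∈ Icc (m + 1) k, f t = ∑ t ∈ Icc l k, f t := by
  simp only [← Finset.Ico_add_one_right_eq_Icc]
  exact sum_Ico_consecutive f hlm (by omega)

theorem Set.setOf_exists_Icc_eq_image {α : Type*} (f : ℕ → α) (a b : ℕ) :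
    {x | ∃ k, a ≤ k ∧ k ≤ b ∧ x = f k} = f '' Set.Icc a b := by
  ext x
  simp [eq_comm, and_assoc]

section Ironing

variable {n : ℕ} {c : ℕ → ℝ}

variable (n c) in
theorem rvcAux_eq_sInf (l : ℕ) :
    rvcAux n c l = sInf (avg c l '' Set.Icc l n) := by
  rw [rvcAux, Set.setOf_exists_Icc_eq_image]

variable (n c) in
theorem rvc_eq_sSup (j : ℕ) :
    rvc n c j = sSup (rvcAux n c '' Set.Icc 1 j) := by
  rw [rvc, Set.setOf_exists_Icc_eq_image]

theorem rvcAux_le_avg {l k : ℕ} (hlk : l ≤ k) (hkn : k ≤ n) : rvcAux n c l ≤ avg c l k := by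
  rw [rvcAux_eq_sInf]
  exact csInf_le ((Set.finite_Icc l n).image _).bddBelow ⟨k, ⟨hlk, hkn⟩, rfl⟩

theorem exists_avg_eq_rvcAux {l : ℕ} (hln : l ≤ n) :
    ∃ k, l ≤ k ∧ k ≤ n ∧ avg c l k = rvcAux n c l := by
  obtain ⟨k, ⟨hlk, hkn⟩, hk⟩ :=
    ((Set.nonempty_Icc.2 hln).image (avg c l)).csInf_mem ((Set.finite_Icc l n).image _)
  exact ⟨k, hlk, hkn, hk.trans (rvcAux_eq_sInf n c l).symm⟩

theorem exists_greatest_avg_eq_rvcAux {l : ℕ} (hln : l ≤ n) :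
    ∃ k, l ≤ k ∧ k ≤ n ∧ avg c l k = rvcAux n c l ∧
      ∀ k', k < k' → k' ≤ n → rvcAux n c l < avg c l k' := by
  classical
  obtain ⟨k₀, hlk₀, hk₀n, hk₀⟩ := exists_avg_eq_rvcAux (c := c) hln
  let P k := l ≤ k ∧ avg c l k = rvcAux n c l
  have hP : P (Nat.findGreatest P n) := Nat.findGreatest_spec hk₀n ⟨hlk₀, hk₀⟩
  refine ⟨Nat.findGreatest P n, hP.1, Nat.findGreatest_le n, hP.2, fun k' hk' hk'n => ?_⟩
  exact (rvcAux_le_avg (by omega) hk'n).lt_of_ne fun h =>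
    Nat.findGreatest_is_greatest hk' hk'n ⟨by omega, h.symm⟩

theorem rvcAux_le_rvc {l j : ℕ} (h1l : 1 ≤ l) (hlj : l ≤ j) : rvcAux n c l ≤ rvc n c j := by
  rw [rvc_eq_sSup]
  exact le_csSup ((Set.finite_Icc 1 j).image _).bddAbove ⟨l, ⟨h1l, hlj⟩, rfl⟩

theorem rvc_le {j : ℕ} (h1j : 1 ≤ j) {x : ℝ} (hx : ∀ l, 1 ≤ l → l ≤ j → rvcAux n c l ≤ x) :
    rvc n c j ≤ x := by
  rw [rvc_eq_sSup]
  exact csSup_le ((Set.nonempty_Icc.2 h1j).image _) fun _ ⟨l, ⟨h1l, hlj⟩, hl⟩ => hl ▸ hx l h1l hlj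

theorem avg_mul {l k : ℕ} (hlk : l ≤ k) :
    avg c l k * ((k : ℝ) - l + 1) = ∑ t ∈ Icc l k, vc c t := by
  have : (l : ℝ) ≤ k := by exact_mod_cast hlk
  exact div_mul_cancel₀ _ (by linarith)

theorem avg_mul_add_avg_mul {l m k : ℕ} (hlm : l ≤ m) (hmk : m < k) :
    avg c l m * ((m : ℝ) - l + 1) + avg c (m + 1) k * ((k : ℝ) - m) =
      avg c l k * ((k : ℝ) - l + 1) := by
  have h := avg_mul (c := c) (Nat.succ_le_of_lt hmk)
  push_cast at h
  rw [avg_mul hlm, avg_mul (hlm.trans hmk.le), show (k : ℝ) - m = k - (m + 1) + 1 by ring, h,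
    sum_Icc_add_sum_Icc _ (by omega) hmk.le]

theorem rvcAux_le_of_avg_eq {l m k : ℕ} (hlm : l ≤ m) (hmk : m ≤ k) (hkn : k ≤ n)
    (hmin : avg c l k = rvcAux n c l) : rvcAux n c m ≤ rvcAux n c l := by
  obtain rfl | hlm := hlm.eq_or_lt
  · exact le_rfl
  obtain ⟨m, rfl⟩ : ∃ m', m = m' + 1 := ⟨m - 1, by omega⟩
  have hsplit := avg_mul_add_avg_mul (c := c) (Nat.le_of_lt_succ hlm) hmk
  have hleft : rvcAux n c l * ((m : ℝ) - l + 1) ≤ avg c l m * ((m : ℝ) - l + 1) := by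
    have : (l : ℝ) ≤ m := by exact_mod_cast Nat.le_of_lt_succ hlm
    exact mul_le_mul_of_nonneg_right (rvcAux_le_avg (by omega) (by omega)) (by linarith)
  have hpos : (0 : ℝ) < k - m := by
    have : (m : ℝ) < k := by exact_mod_cast hmk
    linarith
  calc rvcAux n c (m + 1) ≤ avg c (m + 1) k := rvcAux_le_avg hmk hkn
    _ ≤ rvcAux n c l := le_of_mul_le_mul_right (by rw [hmin] at hsplit; linarith) hpos

theorem rvcAux_lt_rvcAux_succ {l k : ℕ} (hlk : l ≤ k) (hkn : k < n)
    (hmin : avg c l k = rvcAux n c l)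
    (hmax : ∀ k', k < k' → k' ≤ n → rvcAux n c l < avg c l k') :
    rvcAux n c l < rvcAux n c (k + 1) := by
  obtain ⟨k', hkk', hk'n, hk'⟩ := exists_avg_eq_rvcAux (l := k + 1) (c := c) hkn
  have hsplit := avg_mul_add_avg_mul (c := c) hlk hkk'
  have hright : rvcAux n c l * ((k' : ℝ) - l + 1) < avg c l k' * ((k' : ℝ) - l + 1) := by
    have : (l : ℝ) ≤ k' := by exact_mod_cast (by omega : l ≤ k')
    exact mul_lt_mul_of_pos_right (hmax k' hkk' hk'n) (by linarith)
  have hpos : (0 : ℝ) < k' - k := by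
    have : (k : ℝ) < k' := by exact_mod_cast hkk'
    linarith
  rw [← hk']
  exact lt_of_mul_lt_mul_right (by rw [hmin] at hsplit; linarith) hpos.le

-- The guard `k < n` keeps the junk value `rvcAux n c (n + 1) = sInf ∅` out of the condition.
variable (n c) in
def IsIroningBreak (k : ℕ) : Prop :=
  (k < n → ∀ l, 1 ≤ l → l ≤ k → rvcAux n c l < rvcAux n c (k + 1)) ∧
    ∑ t ∈ Icc 1 k, rvc n c t = ∑ t ∈ Icc 1 k, vc c t

theorem isIroningBreak_zero : IsIroningBreak n c 0 :=
  ⟨fun _ l hl hl0 => absurd (hl.trans hl0) (by omega), by simp⟩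

theorem IsIroningBreak.exists_next {k : ℕ} (hk : IsIroningBreak n c k) (hkn : k < n) :
    ∃ K, k < K ∧ K ≤ n ∧ (∀ j, k < j → j ≤ K → rvc n c j = rvcAux n c (k + 1)) ∧
      IsIroningBreak n c K := by
  obtain ⟨K, hkK, hKn, hmin, hmax⟩ := exists_greatest_avg_eq_rvcAux (l := k + 1) (c := c) hkn
  have hblock : ∀ l, 1 ≤ l → l ≤ K → rvcAux n c l ≤ rvcAux n c (k + 1) := fun l hl hlK =>
    if hlk : l ≤ k then (hk.1 hkn l hl hlk).le
    else rvcAux_le_of_avg_eq (by omega) hlK hKn hmin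
  have hflat : ∀ j, k < j → j ≤ K → rvc n c j = rvcAux n c (k + 1) := fun j hkj hjK =>
    le_antisymm (rvc_le (by omega) fun l hl hlj => hblock l hl (hlj.trans hjK))
      (rvcAux_le_rvc (by omega) hkj)
  refine ⟨K, hkK, hKn, hflat, fun hKn' l hl hlK =>
    (hblock l hl hlK).trans_lt (rvcAux_lt_rvcAux_succ hkK hKn' hmin hmax), ?_⟩
  have hconst : ∑ t ∈ Icc (k + 1) K, rvc n c t = ∑ t ∈ Icc (k + 1) K, vc c t := by
    rw [sum_congr rfl fun j hj => hflat j (by simp at hj; omega) (mem_Icc.1 hj).2, sum_const,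
      Nat.card_Icc, nsmul_eq_mul, ← avg_mul hkK, hmin, mul_comm]
    congr 1
    rw [Nat.cast_sub (by omega)]
    push_cast
    ring
  rw [← sum_Icc_add_sum_Icc (rvc n c) (by omega : 1 ≤ k + 1) (by omega : k ≤ K),
    ← sum_Icc_add_sum_Icc (vc c) (by omega : 1 ≤ k + 1) (by omega : k ≤ K), hk.2, hconst]

theorem IsIroningBreak.sum_eq_or_rvc_eq {k : ℕ} (hk : IsIroningBreak n c k) {j : ℕ}
    (hkj : k ≤ j) (hjn : j ≤ n) :
    ∑ t ∈ Icc 1 j, rvc n c t = ∑ t ∈ Icc 1 j, vc c t ∨ (j < n ∧ rvc n c j = rvc n c (j + 1)) := by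
  obtain rfl | hkj := hkj.eq_or_lt
  · exact Or.inl hk.2
  obtain ⟨K, hkK, hKn, hflat, hK⟩ := hk.exists_next (by omega)
  rcases lt_trichotomy j K with hjK | rfl | hKj
  · exact Or.inr ⟨by omega, by rw [hflat j hkj hjK.le, hflat (j + 1) (by omega) hjK]⟩
  · exact Or.inl hK.2
  · exact hK.sum_eq_or_rvc_eq hKj.le hjn
termination_by n - k

theorem sum_mul_rvc_eq_sum_mul_vc (w : ℕ → ℝ)
    (hw : ∀ j, 1 ≤ j → j < n → rvc n c j = rvc n c (j + 1) → w j = w (j + 1)) :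
    ∑ j ∈ Icc 1 n, w j * rvc n c j = ∑ j ∈ Icc 1 n, w j * vc c j := by
  have hbreak : ∀ j ≤ n, ∑ t ∈ Icc 1 j, (rvc n c t - vc c t) = 0 ∨
      (j < n ∧ rvc n c j = rvc n c (j + 1)) := fun j hjn => by
    simpa only [sum_sub_distrib, sub_eq_zero] using
      (isIroningBreak_zero (n := n) (c := c)).sum_eq_or_rvc_eq j.zero_le hjn
  have habel := sum_Icc_mul_eq_mul_sum_Icc w (fun j => rvc n c j - vc c j) n fun j hj hjn =>
    (hbreak j hjn.le).imp_right fun h => hw j hj hjn h.2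
  rw [(hbreak n le_rfl).resolve_right (lt_irrefl n ∘ And.left), mul_zero] at habel
  simpa only [mul_sub, sum_sub_distrib, sub_eq_zero] using habel

end Ironing

theorem stmt18_general (n : ℕ) (c : ℕ → ℝ)
    (U : ℕ → ℝ)
    (hUlevel : ∀ j k, 1 ≤ j → j ≤ n → 1 ≤ k → k ≤ n →
      rvc n c j = rvc n c k → U j = U k)
    (lam : ℝ)
    (Astar : ℕ → ℝ)
    (hAstar : ∀ j, 1 ≤ j → j ≤ n → Astar j = min 1 (lam / Real.sqrt (rvc n c j))) :
    ∑ j ∈ Finset.Icc 1 n, (1 - U j) * Astar j * rvc n c j =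
      ∑ j ∈ Finset.Icc 1 n, (1 - U j) * Astar j * vc c j := by
  refine sum_mul_rvc_eq_sum_mul_vc _ fun j hj hjn heq => ?_
  rw [hUlevel j (j + 1) hj hjn.le (by omega) hjn heq, hAstar j hj hjn.le,
    hAstar (j + 1) (by omega) hjn, heq]

/-- for `U*` constant on level sets of `φ` and
`A*_j = min{1, λ/√φ_j}`, the expected spending computed with the regularized
virtual costs equals the one computed with the virtual costs. -/
theorem stmt18 (n : ℕ) (hn : 1 ≤ n) (c : ℕ → ℝ) (hc0 : c 0 = 0) (hc1 : 0 < c 1)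
    (hmono : ∀ a b, a ≤ b → b ≤ n → c a ≤ c b)
    (U : ℕ → ℝ) (hU : ∀ j, 1 ≤ j → j ≤ n → 0 ≤ U j ∧ U j ≤ 1)
    (hUlevel : ∀ j k, 1 ≤ j → j ≤ n → 1 ≤ k → k ≤ n →
      rvc n c j = rvc n c k → U j = U k)
    (lam : ℝ) (hlam : 0 < lam)
    (Astar : ℕ → ℝ)
    (hAstar : ∀ j, 1 ≤ j → j ≤ n → Astar j = min 1 (lam / Real.sqrt (rvc n c j))) :
    ∑ j ∈ Finset.Icc 1 n, (1 - U j) * Astar j * rvc n c j =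
      ∑ j ∈ Finset.Icc 1 n, (1 - U j) * Astar j * vc c j :=
  stmt18_general n c U hUlevel lam Astar hAstar
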